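/- arXiv:2312.04368 — 2 statements merged into one kernel-verified Lean document; each statement's English description precedes it below -/
import Mathlib

section
/- Let q be a triangle with vertices Q_i, Q_j, Q_k such that every interior angle of q is at least θ_s. If U is a point in the interior of q, then the smallest of the three visibility angles θ_ij, θ_ik, θ_jk at U satisfies θ_s ≤ θ_min ≤ 120°, where θ_min denotes the minimum of the three; consequently, the visibility angle θ_E closest to 90° satisfies |90° − θ_E| ≤ 90° − θ_s, assuming 0° ≤ θ_s ≤ 60°. -/
/-!
For `U` strictly inside the triangle, the line from a vertex through `U` meets the opposite side
at an interior point `X`. Two exterior-angle steps give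
`∠ Qi U Qj ≥ ∠ Qi X Qj ≥ ∠ Qi Qk Qj ≥ θs`, and splitting the angle at `U` along such a cevian
shows that the three visibility angles add up to `2π`, so the smallest is at most `2π/3`.
Every angle in `[θs, 2π/3]` lies within `π/2 - θs` of `π/2` because `θs ≤ π/3`.
-/

open EuclideanGeometry Real

theorem AffineBasis.exists_sbtw_sbtw_of_forall_coord_pos {V P : Type*} [AddCommGroup V]
    [Module ℝ V] [AddTorsor V P] (b : AffineBasis (Fin 3) ℝ P) {U : P}
    (hU : ∀ i, 0 < b.coord i U) :
    ∃ X, Sbtw ℝ (b 1) X (b 2) ∧ Sbtw ℝ (b 0) U X := by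
  have hsum := b.sum_coord_apply_eq_one U
  rw [Fin.sum_univ_three] at hsum
  have h0 := hU 0
  have h1 := hU 1
  have h2 := hU 2
  set s := b.coord 1 U + b.coord 2 U
  have hs : 0 < s := by positivity
  set X := AffineMap.lineMap (b 1) (b 2) (b.coord 2 U / s)
  have hUX : U = AffineMap.lineMap (b 0) X s := by
    refine b.ext_elem fun i => ?_
    fin_cases i <;>
      simp only [X, AffineMap.apply_lineMap, b.coord_apply, AffineMap.lineMap_apply_ring',
        Fin.isValue, Fin.reduceFinMk, Fin.reduceEq, ↓reduceIte] <;>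
      field_simp <;> linarith
  refine ⟨X, sbtw_lineMap_iff.2 ⟨b.ind.injective.ne (by decide), ?_⟩, ?_⟩
  · exact ⟨by positivity, (div_lt_one hs).2 (by linarith)⟩
  · rw [hUX]
    refine sbtw_lineMap_iff.2 ⟨fun h => ?_, hs, by linarith⟩
    simpa [X, AffineMap.apply_lineMap, b.coord_apply] using congrArg (b.coord 0) h

section Angles

variable {V P : Type*} [NormedAddCommGroup V] [InnerProductSpace ℝ V] [MetricSpace P]
  [NormedAddTorsor V P]

theorem angle_le_angle_of_sbtw_of_sbtw {A B C U X : P} (hX : Sbtw ℝ B X C)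
    (hU : Sbtw ℝ A U X) : ∠ A C B ≤ ∠ A U B := by
  have hU_ext := exterior_angle_eq_angle_add_angle (p₃ := B) A hU
  have hX_ext := exterior_angle_eq_angle_add_angle (p₃ := A) B hX
  have hXU : ∠ B X U = ∠ B X A := hU.symm.angle_eq_right B
  have hCX : ∠ A C X = ∠ A C B := hX.symm.angle_eq_right A
  linarith [angle_nonneg U B X, angle_nonneg X A C, angle_comm A U B, angle_comm A X B]

theorem angle_add_angle_add_angle_eq_two_pi_of_sbtw {A B C U X : P} (hX : Sbtw ℝ A X B)
    (hU : Sbtw ℝ C U X) : ∠ A U B + ∠ B U C + ∠ C U A = 2 * π := by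
  have hsplit : ∠ A U X + ∠ X U B = ∠ A U B := angle_add_angle_eq_of_sbtw hX
  have hA := angle_add_angle_eq_pi_of_angle_eq_pi A hU.angle₁₂₃_eq_pi
  have hB := angle_add_angle_eq_pi_of_angle_eq_pi B hU.angle₁₂₃_eq_pi
  linarith [angle_comm X U B, angle_comm C U A]

end Angles

theorem visibility_angle_bounds_interior_general
    (Qi Qj Qk U : EuclideanSpace ℝ (Fin 2)) (θs : ℝ)
    (hθ1 : θs ≤ Real.pi / 3)
    (hind : AffineIndependent ℝ ![Qi, Qj, Qk])
    (hAi : θs ≤ ∠ Qj Qi Qk) (hAj : θs ≤ ∠ Qi Qj Qk) (hAk : θs ≤ ∠ Qi Qk Qj)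
    (hU : U ∈ interior (convexHull ℝ ({Qi, Qj, Qk} : Set (EuclideanSpace ℝ (Fin 2))))) :
    (θs ≤ min (∠ Qi U Qj) (min (∠ Qi U Qk) (∠ Qj U Qk)) ∧
      min (∠ Qi U Qj) (min (∠ Qi U Qk) (∠ Qj U Qk)) ≤ 2 * Real.pi / 3) ∧
    ∀ θE ∈ ({∠ Qi U Qj, ∠ Qi U Qk, ∠ Qj U Qk} : Set ℝ),
      (∀ θ ∈ ({∠ Qi U Qj, ∠ Qi U Qk, ∠ Qj U Qk} : Set ℝ),
          |Real.pi / 2 - θE| ≤ |Real.pi / 2 - θ|) →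
      |Real.pi / 2 - θE| ≤ Real.pi / 2 - θs := by
  let b : AffineBasis (Fin 3) ℝ (EuclideanSpace ℝ (Fin 2)) :=
    ⟨![Qi, Qj, Qk], hind, by rw [hind.affineSpan_eq_top_iff_card_eq_finrank_add_one]; simp⟩
  have hcoord : ∀ i, 0 < b.coord i U := by
    rwa [show {Qi, Qj, Qk} = Set.range b by
      show _ = Set.range ![Qi, Qj, Qk]
      rw [Matrix.range_cons, Matrix.range_cons_cons_empty, Set.singleton_union],
      b.interior_convexHull] at hU
  obtain ⟨X, hX, hUX⟩ := b.exists_sbtw_sbtw_of_forall_coord_pos hcoord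
  obtain ⟨Y, hY, hUY⟩ := (b.reindex (finRotate 3).symm).exists_sbtw_sbtw_of_forall_coord_pos
    fun i => by simpa only [b.coord_reindex] using hcoord _
  have hij : ∠ Qi Qk Qj ≤ ∠ Qi U Qj := angle_le_angle_of_sbtw_of_sbtw hX hUX
  have hik : ∠ Qi Qj Qk ≤ ∠ Qi U Qk := angle_le_angle_of_sbtw_of_sbtw hX.symm hUX
  have hjk : ∠ Qj Qi Qk ≤ ∠ Qj U Qk := angle_le_angle_of_sbtw_of_sbtw hY hUY
  have hsum : ∠ Qj U Qk + ∠ Qk U Qi + ∠ Qi U Qj = 2 * π :=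
    angle_add_angle_add_angle_eq_two_pi_of_sbtw hX hUX
  have hsmall :
      ∠ Qi U Qj ≤ 2 * π / 3 ∨ ∠ Qi U Qk ≤ 2 * π / 3 ∨ ∠ Qj U Qk ≤ 2 * π / 3 := by
    by_contra! h
    linarith [angle_comm Qk U Qi]
  refine ⟨⟨le_min (by linarith) (le_min (by linarith) (by linarith)),
    by simpa only [min_le_iff] using hsmall⟩, ?_⟩
  rintro θE - hclosest
  have hnear : ∀ θ, θs ≤ θ → θ ≤ 2 * π / 3 → |π / 2 - θ| ≤ π / 2 - θs :=
    fun θ hlow hhigh => abs_le.2 ⟨by linarith, by linarith⟩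
  rcases hsmall with h | h | h <;>
    exact (hclosest _ (by simp)).trans (hnear _ (by linarith) h)

/-- If every interior angle of triangle `Qi Qj Qk` is at least `θs` (with
`0 ≤ θs ≤ 60°`) and `U` is strictly inside the triangle, then the minimum of the
three visibility angles at `U` lies in `[θs, 120°]`, and any visibility angle
closest to `90°` satisfies `|90° − θE| ≤ 90° − θs`. Angles in radians. -/
theorem visibility_angle_bounds_interior
    (Qi Qj Qk U : EuclideanSpace ℝ (Fin 2)) (θs : ℝ)
    (hθ0 : 0 ≤ θs) (hθ1 : θs ≤ Real.pi / 3)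
    (hind : AffineIndependent ℝ ![Qi, Qj, Qk])
    (hAi : θs ≤ ∠ Qj Qi Qk) (hAj : θs ≤ ∠ Qi Qj Qk) (hAk : θs ≤ ∠ Qi Qk Qj)
    (hU : U ∈ interior (convexHull ℝ ({Qi, Qj, Qk} : Set (EuclideanSpace ℝ (Fin 2))))) :
    (θs ≤ min (∠ Qi U Qj) (min (∠ Qi U Qk) (∠ Qj U Qk)) ∧
      min (∠ Qi U Qj) (min (∠ Qi U Qk) (∠ Qj U Qk)) ≤ 2 * Real.pi / 3) ∧
    ∀ θE ∈ ({∠ Qi U Qj, ∠ Qi U Qk, ∠ Qj U Qk} : Set ℝ),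
      (∀ θ ∈ ({∠ Qi U Qj, ∠ Qi U Qk, ∠ Qj U Qk} : Set ℝ),
          |Real.pi / 2 - θE| ≤ |Real.pi / 2 - θ|) →
      |Real.pi / 2 - θE| ≤ Real.pi / 2 - θs :=
  visibility_angle_bounds_interior_general Qi Qj Qk U θs hθ1 hind hAi hAj hAk hU
end

section
/- Let triangle △Q_iQ_jQ_k have incircle of radius r₀ touching side Q_iQ_k at point L. Suppose the angle at Q_k is the smallest interior angle, the angle at Q_k is at least θ_s, and ‖Q_iQ_k‖ ≥ d_s. Then tan(θ_s/2) ≤ r₀/(d_s/2), i.e., r₀ ≥ (d_s/2)·tan(θ_s/2). -/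
/-!
The incenter `O₀` lies inside the angle at each vertex and at the same distance `r₀` from its two
sides; since `sin ∠ O₀ Q X · ‖Q O₀‖` is the distance from `O₀` to the line `Q X`, the two parts
into which `Q O₀` cuts the angle at `Q` have equal sines, hence are equal. In the right triangle
`O₀ L Q` this gives the tangent length `‖Q L‖ = r₀ / tan (∠Q / 2)`. The smallest angle, at `Qk`,
therefore has the longer of the two tangent segments on `Qi Qk`, so `‖Qk L‖ ≥ ‖Qi Qk‖ / 2 ≥ ds / 2`,
and `tan (θs / 2) ≤ tan (∠Qk / 2) = r₀ / ‖Qk L‖ ≤ r₀ / (ds / 2)`.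
-/

open EuclideanGeometry Real Metric

theorem Real.eq_of_sin_eq_of_add_lt_pi {x y : ℝ} (hx : 0 ≤ x) (hy : 0 ≤ y) (hxy : x + y < π)
    (h : sin x = sin y) : x = y := by
  wlog hle : x ≤ y generalizing x y
  · exact (this hy hx (by linarith) h.symm (by linarith)).symm
  by_cases hy2 : y ≤ π / 2
  · exact injOn_sin ⟨by linarith, by linarith⟩ ⟨by linarith, hy2⟩ h
  · have : x = π - y :=
      injOn_sin ⟨by linarith, by linarith⟩ ⟨by linarith, by linarith⟩ (by rw [h, sin_pi_sub])
    linarith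

namespace EuclideanGeometry

section

variable {V P : Type*} [NormedAddCommGroup V] [InnerProductSpace ℝ V] [MetricSpace P]
  [NormedAddTorsor V P]

theorem sin_angle_eq_of_mem_line {a b c p : P} (hc : c ∈ line[ℝ, a, b]) (hca : c ≠ a) :
    sin (∠ c a p) = sin (∠ b a p) := by
  rw [← vsub_vadd c a, vadd_left_mem_affineSpan_pair] at hc
  obtain ⟨r, hr⟩ := hc
  have hr0 : r ≠ 0 := by
    rintro rfl
    exact hca (vsub_eq_zero_iff_eq.mp (by simpa using hr.symm))
  rw [angle, angle, ← hr]
  rcases hr0.lt_or_gt with hneg | hpos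
  · rw [InnerProductGeometry.angle_smul_left_of_neg _ _ hneg,
      InnerProductGeometry.angle_neg_left, sin_pi_sub]
  · rw [InnerProductGeometry.angle_smul_left_of_pos _ _ hpos]

theorem sin_angle_mul_dist_eq_infDist (o a b : P) :
    sin (∠ o a b) * dist o a = infDist o (line[ℝ, a, b] : Set P) := by
  set F := (orthogonalProjection line[ℝ, a, b] o : P) with hF
  rw [← dist_orthogonalProjection_eq_infDist, ← hF]
  have hFmem : F ∈ line[ℝ, a, b] := orthogonalProjection_mem o
  by_cases hFa : F = a
  · have hright : ∠ o a b = π / 2 := by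
      rw [← hFa]; exact angle_self_orthogonalProjection o (right_mem_affineSpan_pair ℝ a b)
    rw [hright, sin_pi_div_two, one_mul, hFa]
  · have hright : ∠ o F a = π / 2 :=
      angle_self_orthogonalProjection o (left_mem_affineSpan_pair ℝ a b)
    rw [angle_comm, ← sin_angle_eq_of_mem_line hFmem hFa,
      ← sin_angle_mul_dist_of_angle_eq_pi_div_two hright]

theorem two_mul_angle_eq_of_infDist_eq {a b c o : P} (hadd : ∠ b a o + ∠ o a c = ∠ b a c)
    (hlt : ∠ b a c < π) (hoa : o ≠ a)
    (hd : infDist o (line[ℝ, a, b] : Set P) = infDist o (line[ℝ, a, c] : Set P)) :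
    2 * ∠ b a o = ∠ b a c := by
  rw [← sin_angle_mul_dist_eq_infDist, ← sin_angle_mul_dist_eq_infDist,
    mul_left_inj' (dist_ne_zero.mpr hoa), angle_comm] at hd
  have := Real.eq_of_sin_eq_of_add_lt_pi (angle_nonneg _ _ _) (angle_nonneg _ _ _) (hadd ▸ hlt) hd
  linarith

theorem angle_eq_pi_div_two_of_dist_eq_infDist {s : AffineSubspace ℝ P}
    [s.direction.HasOrthogonalProjection] {p y q : P} (hy : y ∈ s) (hq : q ∈ s)
    (h : dist p y = infDist p (s : Set P)) : ∠ p y q = π / 2 := by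
  have : Nonempty s := ⟨⟨y, hy⟩⟩
  have hfoot : (orthogonalProjection s p : P) = y :=
    (dist_orthogonalProjection_eq_dist_iff_eq_of_mem hy).1
      (by rw [dist_orthogonalProjection_eq_infDist, h])
  rw [← hfoot]
  exact angle_self_orthogonalProjection p hq

theorem tan_angle_mul_dist_eq_dist {a b o L : P} (hL : Wbtw ℝ a L b) (ha : ∠ o L a = π / 2)
    (hb : ∠ o L b = π / 2) (hlt : ∠ b a o < π / 2) : tan (∠ b a o) * dist a L = dist o L := by
  have hLa : L ≠ a := by
    rintro rfl
    rw [angle_comm] at hb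
    exact hlt.ne hb
  rw [← hL.angle_eq_left o hLa, tan_angle_of_angle_eq_pi_div_two ha,
    div_mul_cancel₀ _ (dist_ne_zero.mpr hLa.symm)]

end

section

variable {V : Type*} [NormedAddCommGroup V] [InnerProductSpace ℝ V]

theorem angle_add_angle_eq_of_mem_convexHull {a b c o : V} (ho : o ∈ convexHull ℝ {a, b, c})
    (hb : o ∉ line[ℝ, a, b]) (hc : o ∉ line[ℝ, a, c]) : ∠ b a o + ∠ o a c = ∠ b a c := by
  rw [convexHull_insert (Set.insert_nonempty b {c}), convexHull_pair, mem_convexJoin] at ho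
  obtain ⟨a', rfl, x, hx, hox⟩ := ho
  rw [mem_segment_iff_wbtw] at hx hox
  have hxb : x ≠ b := by
    rintro rfl
    exact hb hox.mem_affineSpan
  have hxc : x ≠ c := by
    rintro rfl
    exact hc hox.mem_affineSpan
  have hoa : o ≠ a' := by
    rintro rfl
    exact hb (left_mem_affineSpan_pair ℝ _ _)
  exact angle_add_angle_eq_of_sbtw_of_sameRay ⟨hx, hxb, hxc⟩ hox.sameRay_vsub_left.symm hoa

theorem two_mul_angle_eq_of_mem_convexHull {a b c o : V} (ho : o ∈ convexHull ℝ {a, b, c})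
    (hb : o ∉ line[ℝ, a, b]) (hc : o ∉ line[ℝ, a, c]) (hlt : ∠ b a c < π)
    (hd : infDist o (line[ℝ, a, b] : Set V) = infDist o (line[ℝ, a, c] : Set V)) :
    2 * ∠ b a o = ∠ b a c :=
  two_mul_angle_eq_of_infDist_eq (angle_add_angle_eq_of_mem_convexHull ho hb hc) hlt
    (fun h ↦ hb (h ▸ left_mem_affineSpan_pair ℝ a b)) hd

theorem tan_half_angle_mul_dist_eq {a b c o L : V} {r : ℝ} (hcol : ¬Collinear ℝ {a, b, c})
    (ho : o ∈ convexHull ℝ {a, b, c}) (hr : 0 < r)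
    (hb : infDist o (line[ℝ, a, b] : Set V) = r) (hc : infDist o (line[ℝ, a, c] : Set V) = r)
    (hL : Wbtw ℝ a L b) (hLo : dist o L = r) : tan (∠ b a c / 2) * dist a L = r := by
  have hoff {x y : V} (h : infDist o (line[ℝ, x, y] : Set V) = r) : o ∉ line[ℝ, x, y] :=
    fun hmem ↦ by linarith [infDist_zero_of_mem hmem]
  have hlt : ∠ b a c < π := angle_lt_pi_of_not_collinear (by rwa [Set.insert_comm])
  have hfoot {q : V} (hq : q ∈ line[ℝ, a, b]) : ∠ o L q = π / 2 :=
    angle_eq_pi_div_two_of_dist_eq_infDist hL.mem_affineSpan hq (hLo.trans hb.symm)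
  have hbis := two_mul_angle_eq_of_mem_convexHull ho (hoff hb) (hoff hc) hlt (hb.trans hc.symm)
  rw [← hbis, mul_div_cancel_left₀ _ two_ne_zero, ← hLo]
  exact tan_angle_mul_dist_eq_dist hL (hfoot (left_mem_affineSpan_pair ℝ a b))
    (hfoot (right_mem_affineSpan_pair ℝ a b)) (by linarith)

end

end EuclideanGeometry

theorem inradius_lower_bound_general
    (Qi Qj Qk O₀ L : EuclideanSpace ℝ (Fin 2)) (r₀ θs ds : ℝ)
    (hind : AffineIndependent ℝ ![Qi, Qj, Qk])
    (hr₀ : 0 < r₀) (hds : 0 < ds) (hθs0 : 0 < θs)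
    (hO₀ : O₀ ∈ interior (convexHull ℝ ({Qi, Qj, Qk} : Set (EuclideanSpace ℝ (Fin 2)))))
    (hdik : Metric.infDist O₀ (affineSpan ℝ ({Qi, Qk} : Set (EuclideanSpace ℝ (Fin 2)))) = r₀)
    (hdij : Metric.infDist O₀ (affineSpan ℝ ({Qi, Qj} : Set (EuclideanSpace ℝ (Fin 2)))) = r₀)
    (hdjk : Metric.infDist O₀ (affineSpan ℝ ({Qj, Qk} : Set (EuclideanSpace ℝ (Fin 2)))) = r₀)
    (hL : L ∈ segment ℝ Qi Qk) (hLO : dist O₀ L = r₀)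
    (hsmall1 : ∠ Qi Qk Qj ≤ ∠ Qk Qi Qj)
    (hangle : θs ≤ ∠ Qi Qk Qj)
    (hside : ds ≤ dist Qi Qk) :
    Real.tan (θs / 2) ≤ r₀ / (ds / 2) := by
  have hncol : ¬Collinear ℝ {Qi, Qj, Qk} := affineIndependent_iff_not_collinear_set.mp hind
  have hhull : O₀ ∈ convexHull ℝ {Qi, Qj, Qk} := interior_subset hO₀
  have hperm_k : ({Qk, Qi, Qj} : Set (EuclideanSpace ℝ (Fin 2))) = {Qi, Qj, Qk} := by
    rw [Set.insert_comm Qk Qi, Set.pair_comm Qk Qj]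
  have hperm_i : ({Qi, Qk, Qj} : Set (EuclideanSpace ℝ (Fin 2))) = {Qi, Qj, Qk} := by
    rw [Set.pair_comm Qk Qj]
  have hwbtw : Wbtw ℝ Qi L Qk := mem_segment_iff_wbtw.mp hL
  have hk : tan (∠ Qi Qk Qj / 2) * dist Qk L = r₀ :=
    tan_half_angle_mul_dist_eq (hperm_k ▸ hncol) (hperm_k ▸ hhull) hr₀
      (by rwa [Set.pair_comm]) (by rwa [Set.pair_comm]) hwbtw.symm hLO
  have hi : tan (∠ Qk Qi Qj / 2) * dist Qi L = r₀ :=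
    tan_half_angle_mul_dist_eq (hperm_i ▸ hncol) (hperm_i ▸ hhull) hr₀ hdik hdij hwbtw hLO
  have hk_lt_pi := angle_lt_pi_of_not_collinear (hperm_i ▸ hncol : ¬Collinear ℝ {Qi, Qk, Qj})
  have hi_lt_pi := angle_lt_pi_of_not_collinear (hperm_k ▸ hncol : ¬Collinear ℝ {Qk, Qi, Qj})
  have htan_θk : tan (θs / 2) ≤ tan (∠ Qi Qk Qj / 2) :=
    strictMonoOn_tan.monotoneOn ⟨by linarith, by linarith⟩ ⟨by linarith, by linarith⟩
      (by linarith)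
  have htan_ki : tan (∠ Qi Qk Qj / 2) ≤ tan (∠ Qk Qi Qj / 2) :=
    strictMonoOn_tan.monotoneOn ⟨by linarith, by linarith⟩ ⟨by linarith, by linarith⟩
      (by linarith)
  have htan_pos : 0 < tan (θs / 2) := tan_pos_of_pos_of_lt_pi_div_two (by linarith) (by linarith)
  have hiL : dist Qi L ≤ dist Qk L := by nlinarith [dist_nonneg (x := Qi) (y := L)]
  have hhalf : ds / 2 ≤ dist Qk L := by linarith [hwbtw.dist_add_dist, dist_comm L Qk]
  calc tan (θs / 2) ≤ tan (∠ Qi Qk Qj / 2) := htan_θk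
    _ = r₀ / dist Qk L := by rw [← hk, mul_div_cancel_right₀ _ (by linarith)]
    _ ≤ r₀ / (ds / 2) := div_le_div_of_nonneg_left hr₀.le (by positivity) hhalf

/-- Inradius lower bound: in a nondegenerate triangle `Qi Qj Qk` whose incircle
(center `O₀`, radius `r₀`, equidistant `r₀` from the three side lines) touches
side `Qi Qk` at `L`, if the interior angle at `Qk` is the smallest one, is at
least `θs`, and `‖Qi Qk‖ ≥ ds`, then `tan (θs/2) ≤ r₀ / (ds/2)`. -/
theorem inradius_lower_bound
    (Qi Qj Qk O₀ L : EuclideanSpace ℝ (Fin 2)) (r₀ θs ds : ℝ)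
    (hind : AffineIndependent ℝ ![Qi, Qj, Qk])
    (hr₀ : 0 < r₀) (hds : 0 < ds) (hθs0 : 0 < θs) (hθs1 : θs < Real.pi)
    (hO₀ : O₀ ∈ interior (convexHull ℝ ({Qi, Qj, Qk} : Set (EuclideanSpace ℝ (Fin 2)))))
    (hdik : Metric.infDist O₀ (affineSpan ℝ ({Qi, Qk} : Set (EuclideanSpace ℝ (Fin 2)))) = r₀)
    (hdij : Metric.infDist O₀ (affineSpan ℝ ({Qi, Qj} : Set (EuclideanSpace ℝ (Fin 2)))) = r₀)
    (hdjk : Metric.infDist O₀ (affineSpan ℝ ({Qj, Qk} : Set (EuclideanSpace ℝ (Fin 2)))) = r₀)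
    (hL : L ∈ segment ℝ Qi Qk) (hLO : dist O₀ L = r₀)
    (hsmall1 : ∠ Qi Qk Qj ≤ ∠ Qk Qi Qj) (hsmall2 : ∠ Qi Qk Qj ≤ ∠ Qi Qj Qk)
    (hangle : θs ≤ ∠ Qi Qk Qj)
    (hside : ds ≤ dist Qi Qk) :
    Real.tan (θs / 2) ≤ r₀ / (ds / 2) :=
  inradius_lower_bound_general Qi Qj Qk O₀ L r₀ θs ds hind hr₀ hds hθs0 hO₀ hdik hdij hdjk hL hLO
    hsmall1 hangle hside
end
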